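/- If for k−1 consecutive steps the agent with smallest opinion updates, then the gap between y and the minimum contracts: y(k−1) − min_i x_i(k−1) ≤ (1 − 1/k)·(y(0) − min_i x_i(0)), where y(t) = max_{i ∈ N_{μ(x(t))}} x_i(t). -/

import Mathlib

open scoped Classical
open Finset

noncomputable def nearList {n : ℕ} (x : Fin n → ℝ) (i : Fin n) : List (Fin n) :=
  @List.insertionSort (Fin n)
    (fun j j' => |x j - x i| < |x j' - x i| ∨ (|x j - x i| = |x j' - x i| ∧ j ≤ j'))
    (Classical.decRel _) (List.finRange n)

/-- The set of the `k` agents nearest to `i` in opinion distance (ties broken by lower index). -/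
noncomputable def nbr {n : ℕ} (k : ℕ) (x : Fin n → ℝ) (i : Fin n) : Finset (Fin n) :=
  ((nearList x i).take k).toFinset

/-- The asynchronous update `f(x,i)`. -/
noncomputable def upd {n : ℕ} (k : ℕ) (x : Fin n → ℝ) (i : Fin n) : Fin n → ℝ :=
  Function.update x i ((∑ j ∈ nbr k x i, x j) / k)

/-- A configuration is clustered if all neighbors of every agent share its opinion. -/
def Clustered {n : ℕ} (k : ℕ) (x : Fin n → ℝ) : Prop :=
  ∀ i : Fin n, ∀ j ∈ nbr k x i, x j = x i

/-- `μ(x)`: lowest index attaining the minimum. -/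
noncomputable def argminIdx {n : ℕ} [NeZero n] (x : Fin n → ℝ) : Fin n :=
  (Finset.univ.filter fun i => ∀ j, x i ≤ x j).min' (by
    obtain ⟨i, -, hi⟩ := Finset.exists_min_image Finset.univ x Finset.univ_nonempty
    exact ⟨i, Finset.mem_filter.mpr ⟨Finset.mem_univ _, fun j => hi j (Finset.mem_univ j)⟩⟩)

/-- `M(x)`: lowest index attaining the maximum. -/
noncomputable def argmaxIdx {n : ℕ} [NeZero n] (x : Fin n → ℝ) : Fin n :=
  argminIdx (fun i => -x i)

/-- Trajectory of the dynamics with (possibly state-dependent) update selector `σ`. -/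
noncomputable def traj {n : ℕ} (k : ℕ) (σ : ℕ → (Fin n → ℝ) → Fin n) (x0 : Fin n → ℝ) :
    ℕ → Fin n → ℝ
  | 0 => x0
  | t + 1 => upd k (traj k σ x0 t) (σ t (traj k σ x0 t))

/-!
When the minimal agent updates, its `k` nearest neighbours are the `k` lowest agents, so it
moves to their average. If `m` bounds all opinions from below and `Y` is the `k`-th smallest
opinion, that average lies between `c = m + (Y - m) / k` (one of the averaged opinions is at
least `Y`, the others at least `m`) and `Y`. Hence opinions only increase, `Y` stays the `k`-th
smallest opinion, which is also `y`, and every update lifts one of the fewer than `k` opinions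
below `c` to at least `c`. After `k - 1` updates all opinions are at least `c`, while `y = Y`.
-/

section NearestNeighbours

variable {n k : ℕ}

lemma argminIdx_le [NeZero n] (x : Fin n → ℝ) (j : Fin n) : x (argminIdx x) ≤ x j := by
  have h : argminIdx x ∈ univ.filter fun i => ∀ j, x i ≤ x j := min'_mem _ _
  exact (mem_filter.mp h).2 j

lemma nearList_perm (x : Fin n → ℝ) (i : Fin n) : (nearList x i).Perm (List.finRange n) :=
  @List.perm_insertionSort _ _ (Classical.decRel _) _

lemma nearList_pairwise (x : Fin n → ℝ) (i : Fin n) :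
    (nearList x i).Pairwise fun j j' => |x j - x i| ≤ |x j' - x i| := by
  let r : Fin n → Fin n → Prop :=
    fun j j' => |x j - x i| < |x j' - x i| ∨ (|x j - x i| = |x j' - x i| ∧ j ≤ j')
  have hr (j j' : Fin n) : r j j' ↔ toLex (|x j - x i|, j) ≤ toLex (|x j' - x i|, j') :=
    (Prod.Lex.toLex_le_toLex (x := (_, j)) (y := (_, j'))).symm
  have : Std.Total r := ⟨fun _ _ => by simpa only [hr] using le_total _ _⟩
  have : IsTrans (Fin n) r := ⟨fun _ _ _ => by simpa only [hr] using le_trans⟩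
  exact (@List.pairwise_insertionSort _ r (Classical.decRel _) _ _ _).imp
    fun h => h.elim le_of_lt fun h => h.1.le

lemma card_nbr_le (x : Fin n → ℝ) (i : Fin n) : #(nbr k x i) ≤ k :=
  (List.toFinset_card_le _).trans (List.length_take_le _ _)

lemma card_nbr (hkn : k ≤ n) (x : Fin n → ℝ) (i : Fin n) : #(nbr k x i) = k := by
  have hnodup : (nearList x i).Nodup := (nearList_perm x i).nodup_iff.mpr (List.nodup_finRange n)
  rw [nbr, List.toFinset_card_of_nodup ((List.take_sublist k _).nodup hnodup), List.length_take,
    (nearList_perm x i).length_eq, List.length_finRange, min_eq_left hkn]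

lemma nbr_nonempty (hk : 0 < k) (hkn : k ≤ n) (x : Fin n → ℝ) (i : Fin n) :
    (nbr k x i).Nonempty :=
  card_pos.mp ((card_nbr hkn x i).symm ▸ hk)

variable [NeZero n]

-- Measured from the minimum, distances are plain differences, so the `k` nearest are the lowest.
lemma le_of_mem_nbr_argminIdx {x : Fin n → ℝ} {j j' : Fin n}
    (hj : j ∈ nbr k x (argminIdx x)) (hj' : j' ∉ nbr k x (argminIdx x)) : x j ≤ x j' := by
  set i := argminIdx x
  have hj'drop : j' ∈ (nearList x i).drop k := by
    have hmem : j' ∈ (nearList x i).take k ++ (nearList x i).drop k := by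
      rw [List.take_append_drop, (nearList_perm x i).mem_iff]
      exact List.mem_finRange j'
    exact (List.mem_append.mp hmem).resolve_left fun h => hj' (List.mem_toFinset.mpr h)
  have hdist := (nearList_pairwise x i).rel_of_mem_take_of_mem_drop (List.mem_toFinset.mp hj)
    hj'drop
  rwa [abs_of_nonneg (sub_nonneg.mpr (argminIdx_le x j)),
    abs_of_nonneg (sub_nonneg.mpr (argminIdx_le x j')), sub_le_sub_iff_right] at hdist

lemma card_filter_lt_of_mem_nbr_argminIdx {x : Fin n → ℝ} {j : Fin n}
    (hj : j ∈ nbr k x (argminIdx x)) : #{i | x i < x j} < k := by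
  have hsub : ({i | x i < x j} : Finset (Fin n)) ⊆ (nbr k x (argminIdx x)).erase j := by
    intro i hi
    have hlt : x i < x j := (mem_filter.mp hi).2
    refine mem_erase.mpr ⟨fun h => hlt.ne (congrArg x h), ?_⟩
    by_contra hi'
    exact (le_of_mem_nbr_argminIdx hj hi').not_gt hlt
  calc #{i | x i < x j} ≤ #((nbr k x (argminIdx x)).erase j) := card_le_card hsub
    _ < #(nbr k x (argminIdx x)) := card_erase_lt_of_mem hj
    _ ≤ k := card_nbr_le x _

end NearestNeighbours

lemma Finset.add_card_sub_one_mul_le_sum {ι : Type*} {s : Finset ι} {f : ι → ℝ} {m : ℝ} {j : ι}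
    (hj : j ∈ s) (hm : ∀ i ∈ s, m ≤ f i) : f j + (#s - 1 : ℝ) * m ≤ ∑ i ∈ s, f i := by
  have h := card_nsmul_le_sum (s.erase j) f m fun i hi => hm i (mem_of_mem_erase hi)
  rw [card_erase_of_mem hj, nsmul_eq_mul, Nat.cast_pred (card_pos.mpr ⟨j, hj⟩)] at h
  rw [← add_sum_erase s f hj]
  linarith

section MinimumUpdate

variable {n k : ℕ} [NeZero n]

noncomputable def minAvg (k : ℕ) (x : Fin n → ℝ) : ℝ :=
  (∑ j ∈ nbr k x (argminIdx x), x j) / k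

lemma upd_argminIdx_apply (x : Fin n → ℝ) (i : Fin n) :
    upd k x (argminIdx x) i = if i = argminIdx x then minAvg k x else x i :=
  Function.update_apply ..

lemma minAvg_eq_expect (hkn : k ≤ n) (x : Fin n → ℝ) :
    minAvg k x = (nbr k x (argminIdx x)).expect x := by
  rw [expect_eq_sum_div_card, card_nbr hkn, minAvg]

lemma minAvg_le (hk : 0 < k) (hkn : k ≤ n) {x : Fin n → ℝ} {b : ℝ}
    (h : ∀ j ∈ nbr k x (argminIdx x), x j ≤ b) : minAvg k x ≤ b := by
  rw [minAvg_eq_expect hkn]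
  exact expect_le (nbr_nonempty hk hkn x _) h

lemma argminIdx_le_minAvg (hk : 0 < k) (hkn : k ≤ n) (x : Fin n → ℝ) :
    x (argminIdx x) ≤ minAvg k x := by
  rw [minAvg_eq_expect hkn]
  exact le_expect (nbr_nonempty hk hkn x _) fun j _ => argminIdx_le x j

lemma le_minAvg (hk : 0 < k) (hkn : k ≤ n) {x : Fin n → ℝ} {m : ℝ} (hm : ∀ i, m ≤ x i)
    {j : Fin n} (hj : j ∈ nbr k x (argminIdx x)) : m + (x j - m) / k ≤ minAvg k x := by
  have hsum := add_card_sub_one_mul_le_sum hj fun i _ => hm i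
  rw [card_nbr hkn] at hsum
  rw [minAvg, le_div_iff₀ (by exact_mod_cast hk)]
  calc (m + (x j - m) / k) * k = x j + (k - 1) * m := by field_simp; ring
    _ ≤ _ := hsum

lemma le_upd_argminIdx (hk : 0 < k) (hkn : k ≤ n) (x : Fin n → ℝ) :
    x ≤ upd k x (argminIdx x) := by
  intro i
  rw [upd_argminIdx_apply]
  split_ifs with hi
  · exact hi ▸ argminIdx_le_minAvg hk hkn x
  · exact le_rfl

lemma card_filter_upd_argminIdx_lt_le {x : Fin n → ℝ} {c : ℝ} (hc : c ≤ minAvg k x) :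
    #{i | upd k x (argminIdx x) i < c} ≤ #{i | x i < c} - 1 := by
  set s : Finset (Fin n) := {i | x i < c}
  have hsub : ({i | upd k x (argminIdx x) i < c} : Finset (Fin n)) ⊆ s.erase (argminIdx x) := by
    intro i hi
    replace hi := (mem_filter.mp hi).2
    rw [upd_argminIdx_apply] at hi
    split_ifs at hi with hμ
    · exact absurd hc hi.not_ge
    · exact mem_erase.mpr ⟨hμ, mem_filter.mpr ⟨mem_univ _, hi⟩⟩
  calc _ ≤ #(s.erase (argminIdx x)) := card_le_card hsub
    _ = #s - 1 := by
      rcases s.eq_empty_or_nonempty with hs | ⟨i, hi⟩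
      · simp [hs]
      · refine card_erase_of_mem (mem_filter.mpr ⟨mem_univ _, ?_⟩)
        exact (argminIdx_le x i).trans_lt (mem_filter.mp hi).2

end MinimumUpdate

def IsKthSmallest {n : ℕ} (k : ℕ) (x : Fin n → ℝ) (Y : ℝ) : Prop :=
  #{i | x i < Y} < k ∧ k ≤ #{i | x i ≤ Y}

namespace IsKthSmallest

variable {n k : ℕ} {x : Fin n → ℝ} {Y : ℝ}

lemma le_of_isKthSmallest {Y' : ℝ} (h : IsKthSmallest k x Y) (h' : IsKthSmallest k x Y') :
    Y ≤ Y' := by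
  by_contra! hlt
  have hsub := monotone_filter_right univ fun i _ (hi : x i ≤ Y') => hi.trans_lt hlt
  exact (h'.2.trans (card_le_card hsub)).not_gt h.1

lemma unique {Y' : ℝ} (h : IsKthSmallest k x Y) (h' : IsKthSmallest k x Y') : Y = Y' :=
  (h.le_of_isKthSmallest h').antisymm (h'.le_of_isKthSmallest h)

lemma le_of_forall_le {m : ℝ} (hk : 0 < k) (h : IsKthSmallest k x Y) (hm : ∀ i, m ≤ x i) :
    m ≤ Y := by
  obtain ⟨i, hi⟩ := card_pos.mp (hk.trans_le h.2)
  exact (hm i).trans (mem_filter.mp hi).2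

variable [NeZero n]

lemma le_of_mem_nbr_argminIdx (h : IsKthSmallest k x Y) {j : Fin n}
    (hj : j ∈ nbr k x (argminIdx x)) : x j ≤ Y := by
  by_contra! hlt
  have hsub := monotone_filter_right univ fun i _ (hi : x i ≤ Y) => hi.trans_lt hlt
  exact (h.2.trans (card_le_card hsub)).not_gt (card_filter_lt_of_mem_nbr_argminIdx hj)

lemma exists_mem_nbr_argminIdx_le (hkn : k ≤ n) (h : IsKthSmallest k x Y) :
    ∃ j ∈ nbr k x (argminIdx x), Y ≤ x j := by
  by_contra! hlt
  have hsub : nbr k x (argminIdx x) ⊆ univ.filter (x · < Y) := fun j hj =>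
    mem_filter.mpr ⟨mem_univ _, hlt j hj⟩
  have hcard := card_le_card hsub
  rw [card_nbr hkn] at hcard
  exact hcard.not_gt h.1

lemma minAvg_le (hk : 0 < k) (hkn : k ≤ n) (h : IsKthSmallest k x Y) : minAvg k x ≤ Y :=
  _root_.minAvg_le hk hkn fun _ => h.le_of_mem_nbr_argminIdx

lemma le_minAvg (hk : 0 < k) (hkn : k ≤ n) (h : IsKthSmallest k x Y) {m : ℝ} (hm : ∀ i, m ≤ x i) :
    m + (Y - m) / k ≤ minAvg k x := by
  obtain ⟨j, hj, hYj⟩ := h.exists_mem_nbr_argminIdx_le hkn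
  calc m + (Y - m) / k ≤ m + (x j - m) / k := by gcongr
    _ ≤ minAvg k x := _root_.le_minAvg hk hkn hm hj

lemma sSup_image_nbr_argminIdx (hk : 0 < k) (hkn : k ≤ n) (x : Fin n → ℝ) :
    IsKthSmallest k x (sSup (x '' (nbr k x (argminIdx x) : Set (Fin n)))) := by
  have hne := nbr_nonempty hk hkn x (argminIdx x)
  rw [← sup'_eq_csSup_image _ hne]
  obtain ⟨j, hj, hsup⟩ := exists_mem_eq_sup' hne x
  rw [hsup]
  refine ⟨card_filter_lt_of_mem_nbr_argminIdx hj, ?_⟩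
  calc k = #(nbr k x (argminIdx x)) := (card_nbr hkn x _).symm
    _ ≤ #{i | x i ≤ x j} := card_le_card fun i hi =>
      mem_filter.mpr ⟨mem_univ _, hsup ▸ le_sup' x hi⟩

lemma upd_argminIdx (hk : 0 < k) (hkn : k ≤ n) (h : IsKthSmallest k x Y) :
    IsKthSmallest k (upd k x (argminIdx x)) Y := by
  constructor
  · refine (card_le_card (monotone_filter_right univ fun i _ hi => ?_)).trans_lt h.1
    exact (le_upd_argminIdx hk hkn x i).trans_lt hi
  · refine h.2.trans (card_le_card (monotone_filter_right univ fun i _ hi => ?_))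
    rw [upd_argminIdx_apply]
    split_ifs
    · exact h.minAvg_le hk hkn
    · exact hi

end IsKthSmallest

section MinimumTrajectory

variable {n k : ℕ} [NeZero n] {X : ℕ → Fin n → ℝ}

lemma monotone_of_upd_argminIdx (hX : ∀ t, X (t + 1) = upd k (X t) (argminIdx (X t)))
    (hk : 0 < k) (hkn : k ≤ n) : Monotone X :=
  monotone_nat_of_le_succ fun t => hX t ▸ le_upd_argminIdx hk hkn (X t)

lemma isKthSmallest_of_upd_argminIdx (hX : ∀ t, X (t + 1) = upd k (X t) (argminIdx (X t)))
    (hk : 0 < k) (hkn : k ≤ n) {Y : ℝ}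
    (h0 : IsKthSmallest k (X 0) Y) (t : ℕ) : IsKthSmallest k (X t) Y := by
  induction t with
  | zero => exact h0
  | succ t ih => exact hX t ▸ ih.upd_argminIdx hk hkn

lemma card_filter_lt_of_upd_argminIdx (hX : ∀ t, X (t + 1) = upd k (X t) (argminIdx (X t)))
    (hk : 0 < k) (hkn : k ≤ n) {Y m : ℝ}
    (h0 : IsKthSmallest k (X 0) Y) (hm : ∀ i, m ≤ X 0 i) (t : ℕ) :
    #{i | X t i < m + (Y - m) / k} ≤ #{i | X 0 i < m + (Y - m) / k} - t := by
  induction t with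
  | zero => rfl
  | succ t ih =>
    have hmt (i : Fin n) : m ≤ X t i :=
      (hm i).trans (monotone_of_upd_argminIdx hX hk hkn t.zero_le i)
    have hstep := card_filter_upd_argminIdx_lt_le
      ((isKthSmallest_of_upd_argminIdx hX hk hkn h0 t).le_minAvg hk hkn hmt)
    rw [← hX] at hstep
    omega

lemma le_of_upd_argminIdx (hX : ∀ t, X (t + 1) = upd k (X t) (argminIdx (X t)))
    (hk : 0 < k) (hkn : k ≤ n) {Y m : ℝ}
    (h0 : IsKthSmallest k (X 0) Y) (hm : ∀ i, m ≤ X 0 i) (i : Fin n) :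
    m + (Y - m) / k ≤ X (k - 1) i := by
  have hcY : m + (Y - m) / k ≤ Y := by
    have := div_le_self (sub_nonneg.mpr (h0.le_of_forall_le hk hm)) (Nat.one_le_cast.mpr hk)
    linarith
  have hbelow : #{i | X 0 i < m + (Y - m) / k} < k :=
    (card_le_card (monotone_filter_right univ fun i _ hi => hi.trans_le hcY)).trans_lt h0.1
  have hnone := card_filter_lt_of_upd_argminIdx hX hk hkn h0 hm (k - 1)
  by_contra! hlt
  have : 0 < #{j | X (k - 1) j < m + (Y - m) / k} :=
    card_pos.mpr ⟨i, mem_filter.mpr ⟨mem_univ i, hlt⟩⟩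
  omega

end MinimumTrajectory

/-- after `k-1` updates by the minimum-opinion agent, the gap `y - min`
contracts by a factor `1 - 1/k`. -/
theorem min_update_contraction {n k : ℕ} [NeZero n] (hk : 1 ≤ k) (hkn : k ≤ n)
    (x0 : Fin n → ℝ) (X : ℕ → Fin n → ℝ)
    (hX : X = traj k (fun _ x => argminIdx x) x0)
    (y : ℕ → ℝ)
    (hy : ∀ t, y t = sSup (X t '' (nbr k (X t) (argminIdx (X t)) : Set (Fin n)))) :
    y (k - 1) - sInf (Set.range (X (k - 1))) ≤
      (1 - 1 / (k : ℝ)) * (y 0 - sInf (Set.range x0)) := by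
  have hstep : ∀ t, X (t + 1) = upd k (X t) (argminIdx (X t)) := by subst hX; exact fun _ => rfl
  have hX0 : X 0 = x0 := by subst hX; rfl
  set m := sInf (Set.range x0)
  have hkth (t : ℕ) : IsKthSmallest k (X t) (y t) :=
    hy t ▸ IsKthSmallest.sSup_image_nbr_argminIdx hk hkn (X t)
  have hm (i : Fin n) : m ≤ X 0 i := hX0 ▸ csInf_le (Set.finite_range x0).bddBelow ⟨i, rfl⟩
  have hy_const : y (k - 1) = y 0 :=
    (hkth _).unique (isKthSmallest_of_upd_argminIdx hstep hk hkn (hkth 0) _)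
  have hinf : m + (y 0 - m) / k ≤ sInf (Set.range (X (k - 1))) :=
    le_csInf (Set.range_nonempty _)
      (Set.forall_mem_range.mpr (le_of_upd_argminIdx hstep hk hkn (hkth 0) hm))
  calc y (k - 1) - sInf (Set.range (X (k - 1))) ≤ y 0 - (m + (y 0 - m) / k) := by
        linarith
    _ = (1 - 1 / (k : ℝ)) * (y 0 - m) := by field_simp; ring
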